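/- Let C be a symmetric positive definite 3×3 real matrix and v ∈ ℝ³ a vector such that vᵀCv < det C. Then the symmetric 6×6 block matrix D = [[C, −M_v],[M_v, C]] is positive definite. -/

import Mathlib

open Matrix

/-- The skew-symmetric `3 × 3` matrix of the cross product with `v`:
`crossMatrix v *ᵥ w = v ×₃ w`. -/
def crossMatrix (v : Fin 3 → ℝ) : Matrix (Fin 3) (Fin 3) ℝ :=
  !![0, -v 2, v 1; v 2, 0, -v 0; -v 1, v 0, 0]

/-!
By the Schur complement criterion, `D` is positive definite iff
`S = C - M_vᵀ C⁻¹ (-M_v) = C + M_v C⁻¹ M_v` is. Writing `C⁻¹ = adj C / det C` and using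
`M_v (adj C) M_v = (Cv)(Cv)ᵀ - (vᵀCv) C` gives
`S = (1 - vᵀCv / det C) C + (Cv)(Cv)ᵀ / det C`: a positive multiple of `C` plus a positive
semidefinite rank-one matrix.
-/

namespace Matrix.PosDef

variable {m n R : Type*} [Fintype m] [Fintype n] [DecidableEq m]
  [CommRing R] [PartialOrder R] [StarRing R] [StarOrderedRing R]

theorem posDef_fromBlocks₁₁_iff {A : Matrix m m R} (B : Matrix m n R) (D : Matrix n n R)
    (hA : A.PosDef) [Invertible A] :
    (fromBlocks A B Bᴴ D).PosDef ↔ (D - Bᴴ * A⁻¹ * B).PosDef := by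
  rw [posDef_iff_dotProduct_mulVec, posDef_iff_dotProduct_mulVec,
    IsHermitian.fromBlocks₁₁ _ _ hA.1]
  refine and_congr_right fun _ ↦ ⟨fun h y hy ↦ ?_, fun h z hz ↦ ?_⟩
  · have hz : (-((A⁻¹ * B) *ᵥ y) ⊕ᵥ y) ≠ 0 := fun h0 ↦ hy (by simpa using congrArg (· ∘ Sum.inr) h0)
    simpa only [dotProduct_mulVec, schur_complement_eq₁₁ B D _ _ hA.1, neg_add_cancel,
      dotProduct_zero, zero_add] using h hz
  obtain ⟨x, y, rfl⟩ : ∃ x y, z = x ⊕ᵥ y := ⟨_, _, (Sum.elim_comp_inl_inr z).symm⟩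
  rw [dotProduct_mulVec, schur_complement_eq₁₁ B D _ _ hA.1, ← dotProduct_mulVec,
    ← dotProduct_mulVec (star y)]
  obtain rfl | hy := eq_or_ne y 0
  · have hx : x ≠ 0 := by rintro rfl; exact hz Sum.elim_zero_zero
    simpa using hA.dotProduct_mulVec_pos hx
  · exact add_pos_of_nonneg_of_pos (hA.posSemidef.dotProduct_mulVec_nonneg _) (h hy)

end Matrix.PosDef

theorem crossMatrix_transpose (v : Fin 3 → ℝ) : (crossMatrix v)ᵀ = -crossMatrix v := by
  ext i j
  fin_cases i <;> fin_cases j <;> simp [crossMatrix]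

/-- Expand `v × (adj C (v × w))` with `adj C (a × b) = (Cᵀa) × (Cᵀb)` and
`v × (a × b) = (v ⬝ b) a - (v ⬝ a) b`. -/
theorem crossMatrix_mul_adjugate_mul_crossMatrix (C : Matrix (Fin 3) (Fin 3) ℝ) (v : Fin 3 → ℝ) :
    crossMatrix v * C.adjugate * crossMatrix v =
      vecMulVec (Cᵀ *ᵥ v) (C *ᵥ v) - (v ⬝ᵥ C *ᵥ v) • Cᵀ := by
  ext i j
  fin_cases i <;> fin_cases j <;>
    simp [crossMatrix, adjugate_fin_three, mul_apply, vecMulVec_apply, mulVec, dotProduct,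
      Fin.sum_univ_three] <;> ring

theorem crossMatrix_mul_inv_mul_crossMatrix (C : Matrix (Fin 3) (Fin 3) ℝ) (v : Fin 3 → ℝ) :
    crossMatrix v * C⁻¹ * crossMatrix v =
      C.det⁻¹ • (vecMulVec (Cᵀ *ᵥ v) (C *ᵥ v) - (v ⬝ᵥ C *ᵥ v) • Cᵀ) := by
  rw [inv_def, Ring.inverse_eq_inv', Matrix.mul_smul, Matrix.smul_mul,
    crossMatrix_mul_adjugate_mul_crossMatrix]

theorem blockMatrix_posDef_general (C : Matrix (Fin 3) (Fin 3) ℝ)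
    (hpd : C.PosDef) (v : Fin 3 → ℝ) (hlt : v ⬝ᵥ C.mulVec v < C.det) :
    (Matrix.fromBlocks C (-(crossMatrix v)) (crossMatrix v) C).PosDef := by
  have hdet : 0 < C.det := hpd.det_pos
  have : Invertible C := hpd.isUnit.invertible
  have hCt : Cᵀ = C := by rw [← conjTranspose_eq_transpose_of_trivial, hpd.1]
  have hMt : (-crossMatrix v)ᴴ = crossMatrix v := by
    rw [conjTranspose_eq_transpose_of_trivial, transpose_neg, crossMatrix_transpose, neg_neg]
  have hschur : C - (-crossMatrix v)ᴴ * C⁻¹ * -crossMatrix v =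
      (1 - (v ⬝ᵥ C *ᵥ v) / C.det) • C + C.det⁻¹ • vecMulVec (C *ᵥ v) (star (C *ᵥ v)) := by
    rw [hMt, mul_neg, sub_neg_eq_add, crossMatrix_mul_inv_mul_crossMatrix, hCt, star_trivial]
    module
  have hS : (C - (-crossMatrix v)ᴴ * C⁻¹ * -crossMatrix v).PosDef := by
    rw [hschur]
    exact (hpd.smul (sub_pos.2 ((div_lt_one hdet).2 hlt))).add_posSemidef
      ((posSemidef_vecMulVec_self_star _).smul (inv_nonneg.2 hdet.le))
  simpa only [hMt] using (hpd.posDef_fromBlocks₁₁_iff _ C).2 hS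

/-- If `C` is a symmetric positive definite `3 × 3` real matrix and `v ∈ ℝ³` satisfies
`vᵀ C v < det C`, then the block matrix `D = [[C, −M_v], [M_v, C]]` is positive definite. -/
theorem blockMatrix_posDef (C : Matrix (Fin 3) (Fin 3) ℝ) (hsymm : C.IsSymm)
    (hpd : C.PosDef) (v : Fin 3 → ℝ) (hlt : v ⬝ᵥ C.mulVec v < C.det) :
    (Matrix.fromBlocks C (-(crossMatrix v)) (crossMatrix v) C).PosDef :=
  blockMatrix_posDef_general C hpd v hlt
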